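/- arXiv:1101.2471 — 3 statements merged into one kernel-verified Lean document; each statement's English description precedes it below -/
import Mathlib

section
/- Let (H, *, 0, μ_H) be a fuzzy hyper BCK-algebra. If for all x,y ∈ H, x ≪ y implies μ_H(x) ≤ μ_H(y), then μ_H(x) = μ_H(0) for all x ∈ H. -/
/-- A hyper BCK-algebra: a carrier `H` with a hyperoperation `m` taking nonempty
set values and a constant `zero`, satisfying (HK1), (HK2), (HK3), where `x ≪ y`
means `zero ∈ m x y` and `A ≪ B` means every `a ∈ A` has some `b ∈ B` with `a ≪ b`. -/
structure HyperBCK (H : Type*) where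
  m : H → H → Set H
  zero : H
  m_nonempty : ∀ x y, (m x y).Nonempty
  hk1 : ∀ x y z : H, ∀ a ∈ ⋃ s ∈ m x z, ⋃ t ∈ m y z, m s t, ∃ b ∈ m x y, zero ∈ m a b
  hk2 : ∀ x y z : H, (⋃ s ∈ m x y, m s z) = ⋃ s ∈ m x z, m s y
  hk3 : ∀ x : H, ∀ a ∈ ⋃ t : H, m x t, zero ∈ m a x

/-- A fuzzy hyper BCK-algebra: a hyper BCK-algebra together with `μ : H → [0,1]`
such that `inf (μ '' (x*y)) ≥ min (μ x) (μ y)` for all `x y`. -/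
structure FuzzyHyperBCK (H : Type*) extends HyperBCK H where
  μ : H → ℝ
  μ_mem : ∀ x, μ x ∈ Set.Icc (0:ℝ) 1
  fuzzy : ∀ x y, min (μ x) (μ y) ≤ sInf (μ '' m x y)

/-- Homomorphism of hyper BCK-algebras: preserves the constant and
`f '' (x*y) = (f x) * (f y)` elementwise. -/
def IsHom {H F : Type*} (A : HyperBCK H) (B : HyperBCK F) (f : H → F) : Prop :=
  f A.zero = B.zero ∧ ∀ x y, f '' A.m x y = B.m (f x) (f y)

/-- Homomorphism of fuzzy hyper BCK-algebras: a hyper BCK homomorphism with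
`μ_F (f x) ≥ μ_H x` for all `x`. -/
def IsFuzzyHom {H F : Type*} (A : FuzzyHyperBCK H) (B : FuzzyHyperBCK F) (f : H → F) : Prop :=
  IsHom A.toHyperBCK B.toHyperBCK f ∧ ∀ x, A.μ x ≤ B.μ (f x)

/-- Hyper BCK-subalgebra: contains `zero` and is closed under the hyperoperation. -/
def IsSubalgebra {H : Type*} (A : HyperBCK H) (S : Set H) : Prop :=
  A.zero ∈ S ∧ ∀ x ∈ S, ∀ y ∈ S, A.m x y ⊆ S

/-
Every element of `x * x` lies below `x`, and `0 ∈ (x * x) * (x * x)` by (HK2) and (HK3). The fuzzy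
inequality then gives `μ x ≤ μ 0` for any fuzzy hyper BCK-algebra. Conversely, (HK1) yields some
`b ∈ x * x` with `0 ≪ b`, and `b ≪ x`; monotonicity of `μ` along `≪` gives `μ 0 ≤ μ b ≤ μ x`.
-/

namespace HyperBCK

variable {H : Type*} (A : HyperBCK H)

theorem zero_mem_m_of_mem_m {x y a : H} (ha : a ∈ A.m x y) : A.zero ∈ A.m a x :=
  A.hk3 x a (Set.mem_iUnion.2 ⟨y, ha⟩)

theorem exists_mem_m_self_zero_mem_m (x : H) :
    ∃ s ∈ A.m x x, ∃ a ∈ A.m x x, A.zero ∈ A.m s a := by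
  obtain ⟨a, ha⟩ := A.m_nonempty x x
  obtain ⟨b, hb⟩ := A.m_nonempty x a
  have hzero : A.zero ∈ ⋃ s ∈ A.m x a, A.m s x :=
    Set.mem_iUnion₂.2 ⟨b, hb, A.zero_mem_m_of_mem_m hb⟩
  rw [A.hk2 x a x] at hzero
  obtain ⟨s, hs, hsa⟩ := Set.mem_iUnion₂.1 hzero
  exact ⟨s, hs, a, ha, hsa⟩

theorem exists_zero_mem_m_zero_and_zero_mem_m (x : H) :
    ∃ b, A.zero ∈ A.m A.zero b ∧ A.zero ∈ A.m b x := by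
  obtain ⟨s, hs, a, ha, hsa⟩ := A.exists_mem_m_self_zero_mem_m x
  obtain ⟨b, hb, hzero⟩ :=
    A.hk1 x x x A.zero (Set.mem_iUnion₂.2 ⟨s, hs, Set.mem_iUnion₂.2 ⟨a, ha, hsa⟩⟩)
  exact ⟨b, hzero, A.zero_mem_m_of_mem_m hb⟩

end HyperBCK

namespace FuzzyHyperBCK

variable {H : Type*} (A : FuzzyHyperBCK H)

theorem min_μ_le_μ_of_mem_m {x y a : H} (ha : a ∈ A.m x y) : min (A.μ x) (A.μ y) ≤ A.μ a :=
  (A.fuzzy x y).trans <|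
    csInf_le ⟨0, by rintro r ⟨c, -, rfl⟩; exact (A.μ_mem c).1⟩ (Set.mem_image_of_mem _ ha)

theorem μ_le_μ_zero (x : H) : A.μ x ≤ A.μ A.zero := by
  obtain ⟨s, hs, a, ha, hsa⟩ := A.exists_mem_m_self_zero_mem_m x
  calc A.μ x = min (A.μ x) (A.μ x) := (min_self _).symm
    _ ≤ min (A.μ s) (A.μ a) :=
      le_min (by simpa using A.min_μ_le_μ_of_mem_m hs) (by simpa using A.min_μ_le_μ_of_mem_m ha)
    _ ≤ A.μ A.zero := A.min_μ_le_μ_of_mem_m hsa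

end FuzzyHyperBCK

/-- If `x ≪ y → μ_H x ≤ μ_H y` for all `x y`, then `μ_H x = μ_H 0` for all `x`. -/
theorem stmt1 {H : Type*} (A : FuzzyHyperBCK H)
    (h : ∀ x y : H, A.zero ∈ A.m x y → A.μ x ≤ A.μ y) :
    ∀ x : H, A.μ x = A.μ A.zero := by
  intro x
  obtain ⟨b, hzero_b, hb_x⟩ := A.exists_zero_mem_m_zero_and_zero_mem_m x
  exact le_antisymm (A.μ_le_μ_zero x) ((h _ _ hzero_b).trans (h _ _ hb_x))
end

section
/- Let K be a hyper BCK-algebra, let (H, μ_H) be a fuzzy hyper BCK-algebra, and let h, g : K → H be homomorphisms of hyper BCK-algebras. Define μ_K : K → [0,1] by μ_K(x) = min(μ_H(h(x)), μ_H(g(x))). Then (K, μ_K) is a fuzzy hyper BCK-algebra, and h and g are homomorphisms of fuzzy hyper BCK-algebras from (K, μ_K) to (H, μ_H). -/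
/-- Pointwise form of `FuzzyHyperBCK.fuzzy`: equivalent to the `sInf` form because `x * y` is
nonempty and `μ` is bounded below. -/
def HyperBCK.IsFuzzySubalgebra {H : Type*} (K : HyperBCK H) (μ : H → ℝ) : Prop :=
  ∀ x y, ∀ a ∈ K.m x y, min (μ x) (μ y) ≤ μ a

theorem FuzzyHyperBCK.isFuzzySubalgebra {H : Type*} (A : FuzzyHyperBCK H) :
    A.IsFuzzySubalgebra A.μ := by
  intro x y a ha
  have hbdd : BddBelow (A.μ '' A.m x y) := ⟨0, by rintro _ ⟨t, -, rfl⟩; exact (A.μ_mem t).1⟩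
  exact (A.fuzzy x y).trans (csInf_le hbdd (Set.mem_image_of_mem _ ha))

theorem HyperBCK.IsFuzzySubalgebra.min {H : Type*} {K : HyperBCK H} {μ ν : H → ℝ}
    (hμ : K.IsFuzzySubalgebra μ) (hν : K.IsFuzzySubalgebra ν) :
    K.IsFuzzySubalgebra fun x => min (μ x) (ν x) := by
  intro x y a ha
  exact le_min ((min_le_min (min_le_left _ _) (min_le_left _ _)).trans (hμ x y a ha))
    ((min_le_min (min_le_right _ _) (min_le_right _ _)).trans (hν x y a ha))

theorem IsHom.isFuzzySubalgebra_comp {H F : Type*} {K : HyperBCK H} {B : HyperBCK F}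
    {f : H → F} {μ : F → ℝ} (hf : IsHom K B f) (hμ : B.IsFuzzySubalgebra μ) :
    K.IsFuzzySubalgebra (μ ∘ f) := by
  intro x y a ha
  exact hμ (f x) (f y) (f a) (hf.2 x y ▸ Set.mem_image_of_mem f ha)

def HyperBCK.toFuzzy {H : Type*} (K : HyperBCK H) (μ : H → ℝ)
    (hμ : ∀ x, μ x ∈ Set.Icc (0 : ℝ) 1) (hK : K.IsFuzzySubalgebra μ) : FuzzyHyperBCK H where
  toHyperBCK := K
  μ := μ
  μ_mem := hμ
  fuzzy x y := le_csInf ((K.m_nonempty x y).image μ) (by rintro _ ⟨a, ha, rfl⟩; exact hK x y a ha)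

/-- Given hyper BCK homomorphisms `h, g : K → H` into a fuzzy hyper
BCK-algebra `(H, μ_H)`, the map `μ_K x = min (μ_H (h x)) (μ_H (g x))` makes `K` a
fuzzy hyper BCK-algebra, and `h`, `g` are fuzzy hyper BCK homomorphisms for it. -/
theorem stmt13 {Kt Ht : Type*} (K : HyperBCK Kt) (A : FuzzyHyperBCK Ht)
    (h g : Kt → Ht) (hh : IsHom K A.toHyperBCK h) (hg : IsHom K A.toHyperBCK g) :
    ∃ C : FuzzyHyperBCK Kt, C.toHyperBCK = K ∧
      (∀ x, C.μ x = min (A.μ (h x)) (A.μ (g x))) ∧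
      IsFuzzyHom C A h ∧ IsFuzzyHom C A g := by
  have hμ : ∀ x, min (A.μ (h x)) (A.μ (g x)) ∈ Set.Icc (0 : ℝ) 1 := fun x =>
    ⟨le_min (A.μ_mem (h x)).1 (A.μ_mem (g x)).1, min_le_of_left_le (A.μ_mem (h x)).2⟩
  have hK : K.IsFuzzySubalgebra fun x => min (A.μ (h x)) (A.μ (g x)) :=
    (hh.isFuzzySubalgebra_comp A.isFuzzySubalgebra).min
      (hg.isFuzzySubalgebra_comp A.isFuzzySubalgebra)
  exact ⟨K.toFuzzy _ hμ hK, rfl, fun _ => rfl,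
    ⟨hh, fun _ => min_le_left _ _⟩, ⟨hg, fun _ => min_le_right _ _⟩⟩
end

section
/- Let (H_i, μ_{H_i})_{i ∈ I} be a family of fuzzy hyper BCK-algebras. On the product H = ∏_{i ∈ I} H_i, equipped with the componentwise hyperoperation x*y = {z ∈ H : z(i) ∈ x(i) *_i y(i) for all i ∈ I} and constant 0 = (i ↦ 0_i), define μ_H : H → [0,1] by μ_H(x) = inf_{i ∈ I} μ_{H_i}(x(i)). Then (H, μ_H) is a fuzzy hyper BCK-algebra, i.e. inf(μ_H(x*y)) ≥ min(μ_H(x), μ_H(y)) for all x, y ∈ H. -/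
universe u v

/-! Every axiom of a hyper BCK-algebra is checked componentwise: a union of products indexed
by a product set is the product of the unions (a choice of witnesses in each factor), so (HK1)–(HK3)
transfer from the factors to the product. The fuzzy inequality holds in each factor for every
element of `x i * y i`, and passes to the infimum over `i`; over an empty index set the real
infimum is the junk value `0`, for which both facts hold trivially. -/

open Set

namespace Real

variable {ι : Sort*}

theorem iInf_mem_Icc_zero_one {f : ι → ℝ} (hf : ∀ i, f i ∈ Icc (0 : ℝ) 1) :
    ⨅ i, f i ∈ Icc (0 : ℝ) 1 := by
  refine ⟨iInf_nonneg fun i => (hf i).1, ?_⟩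
  rcases isEmpty_or_nonempty ι with hι | ⟨⟨i⟩⟩
  · simp [iInf_of_isEmpty]
  · exact ciInf_le_of_le ⟨0, by rintro _ ⟨j, rfl⟩; exact (hf j).1⟩ i (hf i).2

theorem min_iInf_le_iInf {f g h : ι → ℝ} (hf : ∀ i, 0 ≤ f i) (hg : ∀ i, 0 ≤ g i)
    (hfgh : ∀ i, min (f i) (g i) ≤ h i) : min (⨅ i, f i) (⨅ i, g i) ≤ ⨅ i, h i := by
  rcases isEmpty_or_nonempty ι with hι | hι
  · simp [iInf_of_isEmpty]
  · refine le_ciInf fun i => (min_le_min ?_ ?_).trans (hfgh i)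
    · exact ciInf_le ⟨0, by rintro _ ⟨j, rfl⟩; exact hf j⟩ i
    · exact ciInf_le ⟨0, by rintro _ ⟨j, rfl⟩; exact hg j⟩ i

end Real

namespace HyperBCK

variable {I : Type*} {Hs : I → Type*}

def pi (As : ∀ i, HyperBCK (Hs i)) : HyperBCK (∀ i, Hs i) where
  m x y := univ.pi fun i => (As i).m (x i) (y i)
  zero i := (As i).zero
  m_nonempty x y := univ_pi_nonempty_iff.2 fun i => (As i).m_nonempty (x i) (y i)
  hk1 x y z a ha := by
    simp only [biUnion_univ_pi] at ha
    rw [biUnion_univ_pi _ fun i s => ⋃ t ∈ (As i).m (y i) (z i), (As i).m s t, mem_univ_pi] at ha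
    choose b hb hab using fun i => (As i).hk1 (x i) (y i) (z i) (a i) (ha i)
    exact ⟨b, mem_univ_pi.2 hb, mem_univ_pi.2 hab⟩
  hk2 x y z := by
    rw [biUnion_univ_pi _ fun i s => (As i).m s (z i), biUnion_univ_pi _ fun i s => (As i).m s (y i)]
    simp only [(As _).hk2]
  hk3 x a ha := by
    rw [iUnion_univ_pi, mem_univ_pi] at ha
    exact mem_univ_pi.2 fun i => (As i).hk3 (x i) (a i) (ha i)

end HyperBCK

namespace FuzzyHyperBCK

variable {H : Type*}

theorem μ_nonneg (A : FuzzyHyperBCK H) (x : H) : 0 ≤ A.μ x := (A.μ_mem x).1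

theorem min_le_μ_of_mem (A : FuzzyHyperBCK H) {x y z : H} (hz : z ∈ A.m x y) :
    min (A.μ x) (A.μ y) ≤ A.μ z :=
  (A.fuzzy x y).trans <| csInf_le ⟨0, by rintro _ ⟨w, -, rfl⟩; exact A.μ_nonneg w⟩ ⟨z, hz, rfl⟩

variable {I : Type*} {Hs : I → Type*}

noncomputable def pi (As : ∀ i, FuzzyHyperBCK (Hs i)) : FuzzyHyperBCK (∀ i, Hs i) where
  toHyperBCK := HyperBCK.pi fun i => (As i).toHyperBCK
  μ x := ⨅ i, (As i).μ (x i)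
  μ_mem x := Real.iInf_mem_Icc_zero_one fun i => (As i).μ_mem (x i)
  fuzzy x y := by
    refine le_csInf ((HyperBCK.pi _).m_nonempty x y |>.image _) ?_
    rintro _ ⟨z, hz, rfl⟩
    exact Real.min_iInf_le_iInf (fun i => (As i).μ_nonneg _) (fun i => (As i).μ_nonneg _)
      fun i => (As i).min_le_μ_of_mem (hz i (mem_univ i))

end FuzzyHyperBCK

/-- The product of a family of fuzzy hyper BCK-algebras, with the
componentwise hyperoperation, constant `i ↦ 0_i`, and `μ_H x = ⨅ i, μ_{H_i} (x i)`,
is a fuzzy hyper BCK-algebra. -/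
theorem stmt14 {I : Type u} {Hs : I → Type v} (As : ∀ i, FuzzyHyperBCK (Hs i)) :
    ∃ P : FuzzyHyperBCK (∀ i, Hs i),
      P.zero = (fun i => (As i).zero) ∧
      (∀ x y, P.m x y = {z : ∀ i, Hs i | ∀ i, z i ∈ (As i).m (x i) (y i)}) ∧
      (∀ x, P.μ x = ⨅ i, (As i).μ (x i)) :=
  ⟨FuzzyHyperBCK.pi As, rfl, fun _ _ => ext fun _ => mem_univ_pi, fun _ => rfl⟩
end
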